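/- Assume A_1 is invertible and that L̃ has finite entries (which holds unless P is stochastic and the asymptotic drift of X is zero). Define W(n) := (G^{−n} − ℙ(J_{τ^{−n}})) L̃ for n ∈ ℕ, so that W(0) = 0. Then W(n) is invertible for every n ≥ 1, and for all integers a ≥ 1 and b ≥ 1, the matrix ℙ(τ_a^+ < τ_{−b}^−, J_{τ_a^+}), whose (i,j)-entry is ℙ(τ_a^+ < τ_{−b}^−, J_{τ_a^+} = j | X_0 = 0, J_0 = i), satisfies ℙ(τ_a^+ < τ_{−b}^−, J_{τ_a^+}) = W(b) W(a+b)^{−1}. -/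

import Mathlib

/- Framework: a discrete-time, discrete-space upward skip-free Markov additive chain (MAC)
on ℤ × {1,…,N}, with one-step transition matrices `A m` (for a level increment of `m`), is
encoded combinatorially: the law of the chain started at a state `s` is determined by the
weights of its finite trajectories, so every probability/expectation appearing in the paper
can be written as a (countable) sum of trajectory weights. -/

attribute [local instance] Classical.propDecidable

noncomputable section

namespace MACPaper

/-- state space: level × phase -/
abbrev S (N : ℕ) := ℤ × Fin N

variable {N : ℕ}

/-- one-step transition weight -/
def step (A : ℤ → Matrix (Fin N) (Fin N) ℝ) (s t : S N) : ℝ :=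
  A (t.1 - s.1) s.2 t.2

/-- probability weight of a finite trajectory, given by the list of successive states after `s` -/
def wt (A : ℤ → Matrix (Fin N) (Fin N) ℝ) : S N → List (S N) → ℝ
  | _, [] => 1
  | s, t :: r => step A s t * wt A t r

/-- the trajectory (as a function of time) determined by start `s` and subsequent states `l` -/
def pos (s : S N) (l : List (S N)) : ℕ → S N
  | 0 => s
  | n + 1 => l.getD n s

/-- expectation of a path functional over trajectories of length `n` started at `s` -/
def expec (A : ℤ → Matrix (Fin N) (Fin N) ℝ) (s : S N) (n : ℕ)
    (f : (ℕ → S N) → ℝ) : ℝ :=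
  ∑' l : { l : List (S N) // l.length = n }, f (pos s l.1) * wt A s l.1

/-- probability of an event depending on the trajectory up to time `n` -/
def prob (A : ℤ → Matrix (Fin N) (Fin N) ℝ) (s : S N) (n : ℕ)
    (E : (ℕ → S N) → Prop) : ℝ :=
  expec A s n fun p => if E p then 1 else 0

/-- F(z) = Σ_{m=-1}^{∞} z^m A_{-m}   (entrywise) -/
def Fmat (A : ℤ → Matrix (Fin N) (Fin N) ℝ) (z : ℝ) : Matrix (Fin N) (Fin N) ℝ :=
  Matrix.of fun i j => ∑' m : ℤ, z ^ m * A (-m) i j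

/-- P = Σ_m A_m  (entrywise) -/
def Pmat (A : ℤ → Matrix (Fin N) (Fin N) ℝ) : Matrix (Fin N) (Fin N) ℝ :=
  Matrix.of fun i j => ∑' m : ℤ, A m i j

/-- `τ^{x} = n`: the chain first hits level `x` at time `n` -/
def hitsAt (x : ℤ) (n : ℕ) (p : ℕ → S N) : Prop :=
  (p n).1 = x ∧ ∀ k < n, (p k).1 ≠ x

/-- matrix 𝔼(v^{τ^{x}}; τ^{x} < ∞, J_{τ^{x}}), chain started at (0,·) -/
def hitMat (A : ℤ → Matrix (Fin N) (Fin N) ℝ) (v : ℝ) (x : ℤ) :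
    Matrix (Fin N) (Fin N) ℝ :=
  Matrix.of fun i j =>
    ∑' n : ℕ, v ^ n * prob A ((0 : ℤ), i) n fun p => hitsAt x n p ∧ (p n).2 = j

/-- v-discounted occupation mass matrix at level `x` (infinite horizon), chain started at (0,·) -/
def occMat (A : ℤ → Matrix (Fin N) (Fin N) ℝ) (v : ℝ) (x : ℤ) :
    Matrix (Fin N) (Fin N) ℝ :=
  Matrix.of fun i j =>
    ∑' k : ℕ, v ^ k * prob A ((0 : ℤ), i) k fun p => p k = (x, j)

/-- v-discounted occupation mass at level 0 up to the first hitting time of level `n` -/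
def occUpToMat (A : ℤ → Matrix (Fin N) (Fin N) ℝ) (v : ℝ) (n : ℤ) :
    Matrix (Fin N) (Fin N) ℝ :=
  Matrix.of fun i j =>
    ∑' k : ℕ, v ^ k * prob A ((0 : ℤ), i) k fun p =>
      p k = ((0 : ℤ), j) ∧ ∀ m < k, (p m).1 ≠ n

/-- the fundamental matrix G = ℙ(J_{τ^{1}}) -/
def Gmat (A : ℤ → Matrix (Fin N) (Fin N) ℝ) : Matrix (Fin N) (Fin N) ℝ :=
  hitMat A 1 1

/-- L̃ : occupation mass matrix at level 0, infinite horizon -/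
def Ltilde (A : ℤ → Matrix (Fin N) (Fin N) ℝ) : Matrix (Fin N) (Fin N) ℝ :=
  occMat A 1 0

/-- the first scale matrix W(n) = (G^{-n} - ℙ(J_{τ^{-n}})) L̃ -/
def Wmat (A : ℤ → Matrix (Fin N) (Fin N) ℝ) (n : ℕ) : Matrix (Fin N) (Fin N) ℝ :=
  ((Gmat A)⁻¹ ^ n - hitMat A 1 (-(n : ℤ))) * Ltilde A

/-- v-discounted first scale matrix W_v(n) = (G_v^{-n} - 𝔼(v^{τ^{-n}}; J_{τ^{-n}})) L̃_v -/
def WmatV (A : ℤ → Matrix (Fin N) (Fin N) ℝ) (v : ℝ) (n : ℕ) :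
    Matrix (Fin N) (Fin N) ℝ :=
  ((hitMat A v 1)⁻¹ ^ n - hitMat A v (-(n : ℤ))) * occMat A v 0

/-- the second scale matrix Z(z,n) = z^{-n}[I + Σ_{k=0}^{n} z^k W(k) (I - F(z))] -/
def Zmat (A : ℤ → Matrix (Fin N) (Fin N) ℝ) (z : ℝ) (n : ℕ) :
    Matrix (Fin N) (Fin N) ℝ :=
  z⁻¹ ^ n • (1 + (∑ k ∈ Finset.range (n + 1), z ^ k • Wmat A k) * (1 - Fmat A z))

/-- matrix 𝔼(v^{τ_a^+}; τ_a^+ < τ_{-b}^-, J_{τ_a^+}) (upward exit from the strip [-b,a]) -/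
def upExitMat (A : ℤ → Matrix (Fin N) (Fin N) ℝ) (v : ℝ) (a b : ℤ) :
    Matrix (Fin N) (Fin N) ℝ :=
  Matrix.of fun i j =>
    ∑' n : ℕ, v ^ n * prob A ((0 : ℤ), i) n fun p =>
      a ≤ (p n).1 ∧ (∀ k < n, -b < (p k).1 ∧ (p k).1 < a) ∧ (p n).2 = j

/-- matrix 𝔼(z^{-X_{τ_{-b}^-}}; τ_{-b}^- < τ_a^+, J_{τ_{-b}^-}) (downward exit from [-b,a]) -/
def downExitMat (A : ℤ → Matrix (Fin N) (Fin N) ℝ) (z : ℝ) (a b : ℤ) :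
    Matrix (Fin N) (Fin N) ℝ :=
  Matrix.of fun i j =>
    ∑' n : ℕ, expec A ((0 : ℤ), i) n fun p =>
      if (p n).1 ≤ -b ∧ (∀ k < n, -b < (p k).1 ∧ (p k).1 < a) ∧ (p n).2 = j
      then z ^ (-(p n).1) else 0

/-- matrix 𝔼(z^{-X_{τ_{-b}^-}}; τ_{-b}^- < ∞, J_{τ_{-b}^-}) (one-sided downward exit) -/
def oneDownMat (A : ℤ → Matrix (Fin N) (Fin N) ℝ) (z : ℝ) (b : ℤ) :
    Matrix (Fin N) (Fin N) ℝ :=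
  Matrix.of fun i j =>
    ∑' n : ℕ, expec A ((0 : ℤ), i) n fun p =>
      if (p n).1 ≤ -b ∧ (∀ k < n, -b < (p k).1) ∧ (p n).2 = j
      then z ^ (-(p n).1) else 0

/-- two-sided Skorokhod reflection of the level path `X` in [-d,0], started at `x`:
the regulated process H -/
def reflH (d : ℕ) (x : ℤ) (X : ℕ → ℤ) : ℕ → ℤ
  | 0 => x
  | n + 1 =>
      reflH d x X n + (X (n + 1) - X n)
        - max (reflH d x X n + (X (n + 1) - X n)) 0
        + max (-(d : ℤ) - (reflH d x X n + (X (n + 1) - X n))) 0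

/-- upper regulator R^+ of the two-sided reflection in [-d,0] -/
def reflRp (d : ℕ) (x : ℤ) (X : ℕ → ℤ) : ℕ → ℤ
  | 0 => 0
  | n + 1 => reflRp d x X n + max (reflH d x X n + (X (n + 1) - X n)) 0

/-- lower regulator R^- of the two-sided reflection in [-d,0] -/
def reflRm (d : ℕ) (x : ℤ) (X : ℕ → ℤ) : ℕ → ℤ
  | 0 => 0
  | n + 1 => reflRm d x X n + max (-(d : ℤ) - (reflH d x X n + (X (n + 1) - X n))) 0

/-- lower regulator of the one-sided reflection at -b : R^{-b}_n = -b - min(-b, min_{k≤n} X_k) -/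
def lowReg (b : ℤ) (X : ℕ → ℤ) (n : ℕ) : ℤ :=
  -b - min (-b) ((Finset.range (n + 1)).inf' ⟨0, Finset.mem_range.mpr (Nat.succ_pos n)⟩ X)


/-!
All path sums are taken in `ℝ≥0∞`, where series may be rearranged freely, and are moved to `ℝ`
only at the end. Splitting paths at the first entrance into a set of states (the strong Markov
property) and using that the chain is upward skip-free gives:
* `ℙ(J_{τ^{n}}) = Gⁿ` for `n ≥ 0`;
* splitting at the exit from the strip `(-b, a)`, with `U` the upward exit matrix and `D` the mass
  of the downward exits followed by the return to level `-b`: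
  `Gᵃ = U + D Gᵃ⁺ᵇ` and `ℙ(J_{τ^{-b}}) = U ℙ(J_{τ^{-(a+b)}}) + D`;
* `G = A₁ + B G` with `B = Σ_{m ≤ 0} A_m G^{-m}` (first step), so `G` is invertible with `A₁`;
* `L̃ = Lₙ + Gⁿ ℙ(J_{τ^{-n}}) L̃`, where `Lₙ` is the occupation of level `0` before level `n`
  is hit, and `Lₙ = 1 + Rₙ Lₙ` by a first-return decomposition. Hence `Lₙ` is invertible, and so is
  `W(n) = G⁻ⁿ Lₙ`.
Eliminating `D` from the two strip identities gives `U W(a+b) = W(b)`.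
-/

open scoped ENNReal

section Paths

variable (A : ℤ → Matrix (Fin N) (Fin N) ℝ)

def estep (s t : S N) : ℝ≥0∞ := ENNReal.ofReal (A (t.1 - s.1) s.2 t.2)

def ewt : S N → List (S N) → ℝ≥0∞
  | _, [] => 1
  | s, t :: r => estep A s t * ewt t r

def lastState : S N → List (S N) → S N
  | s, [] => s
  | _, t :: r => lastState t r

variable {A}

@[simp] lemma ewt_nil (s : S N) : ewt A s [] = 1 := rfl

@[simp] lemma ewt_cons (s t : S N) (r : List (S N)) :
    ewt A s (t :: r) = estep A s t * ewt A t r := rfl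

@[simp] lemma lastState_nil (s : S N) : lastState s ([] : List (S N)) = s := rfl

@[simp] lemma lastState_cons (s t : S N) (r : List (S N)) :
    lastState s (t :: r) = lastState t r := rfl

lemma ewt_ne_top (s : S N) (l : List (S N)) : ewt A s l ≠ ∞ := by
  induction l generalizing s with
  | nil => simp
  | cons t r ih => exact ENNReal.mul_ne_top ENNReal.ofReal_ne_top (ih t)

lemma toReal_ewt (hA : ∀ m i j, 0 ≤ A m i j) (s : S N) (l : List (S N)) :
    (ewt A s l).toReal = wt A s l := by
  induction l generalizing s with
  | nil => simp [wt]
  | cons t r ih =>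
    rw [ewt_cons, ENNReal.toReal_mul, ih t, estep, ENNReal.toReal_ofReal (hA _ _ _)]
    rfl

lemma ewt_append (s : S N) (l₁ l₂ : List (S N)) :
    ewt A s (l₁ ++ l₂) = ewt A s l₁ * ewt A (lastState s l₁) l₂ := by
  induction l₁ generalizing s with
  | nil => simp
  | cons t r ih => simp [ih t, mul_assoc]

@[simp] lemma pos_zero (s : S N) (l : List (S N)) : pos s l 0 = s := rfl

lemma pos_succ (s : S N) (l : List (S N)) (k : ℕ) : pos s l (k + 1) = l.getD k s := rfl

lemma pos_cons {s t : S N} {r : List (S N)} {k : ℕ} (h : k ≤ r.length) :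
    pos s (t :: r) (k + 1) = pos t r k := by
  cases k with
  | zero => rfl
  | succ k =>
    rw [pos_succ, pos_succ, List.getD_cons_succ, List.getD_eq_getElem _ _ h,
      List.getD_eq_getElem _ _ h]

lemma pos_length (s : S N) (l : List (S N)) : pos s l l.length = lastState s l := by
  induction l generalizing s with
  | nil => rfl
  | cons t r ih => rw [List.length_cons, pos_cons le_rfl, ih t, lastState_cons]

lemma pos_map (f : S N → S N) (s : S N) (l : List (S N)) (k : ℕ) :
    pos (f s) (l.map f) k = f (pos s l k) := by
  cases k with
  | zero => rfl
  | succ k => exact List.getD_map l s f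

lemma lastState_map (f : S N → S N) (s : S N) (l : List (S N)) :
    lastState (f s) (l.map f) = f (lastState s l) := by
  induction l generalizing s with
  | nil => rfl
  | cons t r ih => exact ih t

lemma pos_append_left {s : S N} {l₁ l₂ : List (S N)} {k : ℕ} (h : k ≤ l₁.length) :
    pos s (l₁ ++ l₂) k = pos s l₁ k := by
  cases k with
  | zero => rfl
  | succ k => exact List.getD_append l₁ l₂ s k h

lemma pos_append_right {s : S N} {l₁ l₂ : List (S N)} {k : ℕ} (h : k ≤ l₂.length) :
    pos s (l₁ ++ l₂) (l₁.length + k) = pos (lastState s l₁) l₂ k := by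
  induction l₁ generalizing s with
  | nil => simp
  | cons t r ih =>
    rw [List.cons_append, List.length_cons, Nat.add_right_comm, pos_cons (by simp; omega), ih,
      lastState_cons]

lemma lastState_take {s : S N} {l : List (S N)} {k : ℕ} (hk : k ≤ l.length) :
    lastState s (l.take k) = pos s l k := by
  conv_rhs => rw [← List.take_append_drop k l]
  rw [← pos_length, pos_append_left (by simp [hk]), List.length_take_of_le hk]

lemma pos_take {s : S N} {l : List (S N)} {k m : ℕ} (hm : m ≤ k) (hk : k ≤ l.length) :
    pos s (l.take k) m = pos s l m := by
  conv_rhs => rw [← List.take_append_drop k l]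
  rw [pos_append_left (by simp; omega)]

lemma pos_drop {s : S N} {l : List (S N)} {k m : ℕ} (hk : k ≤ l.length)
    (hm : m ≤ l.length - k) : pos (pos s l k) (l.drop k) m = pos s l (k + m) := by
  have h := pos_append_right (s := s) (l₁ := l.take k) (l₂ := l.drop k) (k := m)
    (by simpa using hm)
  rwa [List.take_append_drop, List.length_take_of_le hk, lastState_take hk, eq_comm] at h

lemma lastState_drop {s : S N} {l : List (S N)} {k : ℕ} (hk : k ≤ l.length) :
    lastState (pos s l k) (l.drop k) = lastState s l := by
  rw [← pos_length, List.length_drop, pos_drop hk le_rfl, Nat.add_sub_cancel' hk, pos_length]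

lemma ewt_eq_ewt_take_mul_ewt_drop {s : S N} {l : List (S N)} {k : ℕ} (hk : k ≤ l.length) :
    ewt A s l = ewt A s (l.take k) * ewt A (pos s l k) (l.drop k) := by
  conv_lhs => rw [← List.take_append_drop k l]
  rw [ewt_append, lastState_take hk]

lemma level_pos_succ_le (hskip : ∀ m : ℤ, 2 ≤ m → A m = 0) {s : S N} {l : List (S N)}
    (hw : ewt A s l ≠ 0) : ∀ k < l.length, (pos s l (k + 1)).1 ≤ (pos s l k).1 + 1 := by
  induction l generalizing s with
  | nil => simp
  | cons t r ih =>
    rw [ewt_cons, mul_ne_zero_iff] at hw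
    intro k hk
    cases k with
    | zero =>
      rw [pos_cons (Nat.zero_le _), pos_zero, pos_zero]
      by_contra hlt
      exact hw.1 (by rw [estep, hskip _ (by omega)]; simp)
    | succ k =>
      rw [List.length_cons] at hk
      rw [pos_cons (by omega), pos_cons (by omega)]
      exact ih hw.2 k (by omega)

end Paths

lemma exists_first_le {P : ℕ → Prop} {n : ℕ} (hn : P n) :
    ∃ k ≤ n, P k ∧ ∀ m < k, ¬ P m := by
  classical
  exact ⟨Nat.find ⟨n, hn⟩, Nat.find_min' _ hn, Nat.find_spec _, fun m hm => Nat.find_min _ hm⟩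

/-- Discrete intermediate value theorem. -/
lemma exists_first_eq_of_succ_le {p : ℕ → ℤ} {n : ℕ} {c : ℤ}
    (hstep : ∀ k < n, p (k + 1) ≤ p k + 1) (h0 : p 0 < c) (hn : c ≤ p n) :
    ∃ k, 0 < k ∧ k ≤ n ∧ p k = c ∧ ∀ m < k, p m < c := by
  obtain ⟨k, hkn, hk, hmin⟩ := exists_first_le (P := fun m => c ≤ p m) hn
  obtain ⟨k, rfl⟩ : ∃ k', k = k' + 1 := Nat.exists_eq_succ_of_ne_zero (by rintro rfl; omega)
  have := hstep k (by omega)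
  have := hmin k (by omega)
  exact ⟨k + 1, by omega, hkn, by omega, fun m hm => by have := hmin m hm; omega⟩

section PathMass

variable {A : ℤ → Matrix (Fin N) (Fin N) ℝ}

variable (A) in
def pathMass (s : S N) (E : List (S N) → Prop) : ℝ≥0∞ :=
  ∑' l : List (S N), if E l then ewt A s l else 0

lemma pathMass_congr {s : S N} {E E' : List (S N) → Prop}
    (h : ∀ l, ewt A s l ≠ 0 → (E l ↔ E' l)) : pathMass A s E = pathMass A s E' := by
  refine tsum_congr fun l => ?_
  by_cases hw : ewt A s l = 0
  · simp [hw]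
  · simp only [h l hw]

lemma pathMass_mono {s : S N} {E E' : List (S N) → Prop} (h : ∀ l, E l → E' l) :
    pathMass A s E ≤ pathMass A s E' :=
  ENNReal.tsum_le_tsum fun l => by
    by_cases hE : E l
    · simp [hE, h l hE]
    · simp [hE]

lemma pathMass_eq_zero {s : S N} {E : List (S N) → Prop} (h : ∀ l, E l → ewt A s l = 0) :
    pathMass A s E = 0 :=
  ENNReal.tsum_eq_zero.2 fun l => by
    by_cases hE : E l
    · simp [hE, h l hE]
    · simp [hE]

lemma pathMass_eq_add_not (s : S N) (E P : List (S N) → Prop) :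
    pathMass A s E = pathMass A s (fun l => E l ∧ P l) + pathMass A s (fun l => E l ∧ ¬ P l) := by
  rw [pathMass, pathMass, pathMass, ← ENNReal.tsum_add]
  refine tsum_congr fun l => ?_
  by_cases h1 : E l <;> by_cases h2 : P l <;> simp [h1, h2]

lemma pathMass_eq_nil (s : S N) : pathMass A s (· = []) = 1 := by
  rw [pathMass, tsum_eq_single ([] : List (S N)) fun l hl => by rw [if_neg hl]]
  simp

lemma tsum_list {α : Type*} (f : List α → ℝ≥0∞) :
    ∑' l : List α, f l = f [] + ∑' p : α × List α, f (p.1 :: p.2) := by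
  rw [ENNReal.tsum_eq_add_tsum_ite []]
  congr 1
  refine tsum_eq_tsum_of_ne_zero_bij (fun p => p.1.1 :: p.1.2) ?_ ?_ ?_
  · rintro ⟨⟨a, r⟩, _⟩ ⟨⟨b, t⟩, _⟩ h
    simp only [List.cons.injEq] at h
    obtain ⟨rfl, rfl⟩ := h
    rfl
  · intro l hl
    cases l with
    | nil => simp at hl
    | cons a r => exact ⟨⟨(a, r), by simpa using hl⟩, rfl⟩
  · intro p
    simp

/-- First-step decomposition of a path sum. -/
lemma pathMass_eq_ite_add_tsum (s : S N) (E : List (S N) → Prop) :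
    pathMass A s E = (if E [] then 1 else 0)
      + ∑' t, estep A s t * pathMass A t (fun r => E (t :: r)) := by
  rw [pathMass, tsum_list, ENNReal.tsum_prod']
  congr 1
  refine tsum_congr fun t => ?_
  rw [pathMass, ← ENNReal.tsum_mul_left]
  refine tsum_congr fun r => ?_
  split_ifs <;> simp

lemma pathMass_eq_ite_add_ne_nil (s : S N) (E : List (S N) → Prop) :
    pathMass A s E = (if E [] then 1 else 0) + pathMass A s (fun l => E l ∧ l ≠ []) := by
  rw [pathMass_eq_ite_add_tsum s E, pathMass_eq_ite_add_tsum s (fun l => E l ∧ l ≠ [])]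
  simp

def PrefixFree {α : Type*} (E : List α → Prop) : Prop :=
  ∀ l l', E l → E (l ++ l') → l' = []

lemma PrefixFree.anti {α : Type*} {E E' : List α → Prop} (hE : PrefixFree E)
    (h : ∀ l, E' l → E l) : PrefixFree E' :=
  fun l l' h₁ h₂ => hE l l' (h l h₁) (h _ h₂)

lemma prefixFree_length_eq {α : Type*} (n : ℕ) : PrefixFree fun l : List α => l.length = n :=
  fun l l' h₁ h₂ => List.eq_nil_of_length_eq_zero (by simp at h₂; omega)

section Substochastic

variable (hrow : ∀ s : S N, ∑' t, estep A s t ≤ 1)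
include hrow

lemma pathMass_le_one_of_length_le (n : ℕ) :
    ∀ (s : S N) {E : List (S N) → Prop}, PrefixFree E →
      pathMass A s (fun l => E l ∧ l.length ≤ n) ≤ 1 := by
  induction n with
  | zero =>
    intro s E _
    calc _ ≤ pathMass A s (· = []) :=
          pathMass_mono fun l h => List.eq_nil_of_length_eq_zero (by omega)
      _ = 1 := pathMass_eq_nil s
  | succ n ih =>
    intro s E hE
    by_cases hnil : E []
    · calc _ ≤ pathMass A s (· = []) := pathMass_mono fun l h => hE [] l hnil h.1
        _ = 1 := pathMass_eq_nil s
    rw [pathMass_eq_ite_add_tsum, if_neg fun h => hnil h.1, zero_add]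
    calc _ ≤ ∑' t, estep A s t := ENNReal.tsum_le_tsum fun t => by
          simp only [List.length_cons, add_le_add_iff_right]
          exact mul_le_of_le_one_right' (ih t fun l l' h₁ h₂ => hE (t :: l) l' h₁ h₂)
      _ ≤ 1 := hrow s

lemma pathMass_le_one {s : S N} {E : List (S N) → Prop} (hE : PrefixFree E) :
    pathMass A s E ≤ 1 := by
  rw [pathMass, ENNReal.tsum_eq_iSup_sum]
  refine iSup_le fun F => ?_
  calc ∑ l ∈ F, (if E l then ewt A s l else 0)
      ≤ pathMass A s (fun l => E l ∧ l.length ≤ F.sup List.length) :=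
        (Finset.sum_le_sum fun l hl => by
          by_cases h : E l
          · simp [h, Finset.le_sup (f := List.length) hl]
          · simp [h]).trans (ENNReal.sum_le_tsum F)
    _ ≤ 1 := pathMass_le_one_of_length_le hrow _ s hE

lemma pathMass_ne_top {s : S N} {E : List (S N) → Prop} (hE : PrefixFree E) :
    pathMass A s E ≠ ∞ :=
  ne_top_of_le_ne_top ENNReal.one_ne_top (pathMass_le_one hrow hE)

end Substochastic

lemma estep_tsum_le_one (hA : ∀ m i j, 0 ≤ A m i j)
    (hsum : ∀ i, Summable fun q : ℤ × Fin N => A q.1 i q.2)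
    (hsub : ∀ i, ∑' q : ℤ × Fin N, A q.1 i q.2 ≤ 1) (s : S N) :
    ∑' t, estep A s t ≤ 1 := by
  have hshift : ∑' t : S N, estep A s t = ∑' q : ℤ × Fin N, ENNReal.ofReal (A q.1 s.2 q.2) := by
    rw [ENNReal.tsum_prod', ENNReal.tsum_prod',
      ← (Equiv.subRight s.1).tsum_eq fun m => ∑' j, ENNReal.ofReal (A m s.2 j)]
    rfl
  rw [hshift, ← ENNReal.ofReal_tsum_of_nonneg (fun q => hA _ _ _) (hsum s.2), ← ENNReal.ofReal_one]
  exact ENNReal.ofReal_le_ofReal (hsub s.2)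

lemma tsum_pathMass_length_eq (s : S N) (E : List (S N) → Prop) :
    ∑' n, pathMass A s (fun l => l.length = n ∧ E l) = pathMass A s E := by
  simp only [pathMass]
  rw [ENNReal.tsum_comm]
  refine tsum_congr fun l => ?_
  rw [tsum_eq_single l.length fun n hn => by rw [if_neg fun h => hn h.1.symm]]
  simp

lemma prob_eq_toReal_pathMass (hA : ∀ m i j, 0 ≤ A m i j) (s : S N) (n : ℕ)
    (Ev : (ℕ → S N) → Prop) :
    prob A s n Ev = (pathMass A s fun l => l.length = n ∧ Ev (pos s l)).toReal := by
  rw [prob, expec, pathMass, ENNReal.tsum_toReal_eq fun l => by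
    split_ifs
    exacts [ewt_ne_top _ _, ENNReal.zero_ne_top]]
  refine (tsum_subtype {l : List (S N) | l.length = n}
    fun l => (if Ev (pos s l) then (1 : ℝ) else 0) * wt A s l).trans (tsum_congr fun l => ?_)
  by_cases hl : l.length = n <;> by_cases hE : Ev (pos s l) <;>
    simp [Set.indicator, hl, hE, toReal_ewt hA]

section Bridge

variable (hA : ∀ m i j, 0 ≤ A m i j) (hrow : ∀ s : S N, ∑' t, estep A s t ≤ 1)
include hA hrow

lemma ofReal_prob {s : S N} {n : ℕ} {Ev : (ℕ → S N) → Prop} :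
    ENNReal.ofReal (prob A s n Ev) = pathMass A s fun l => l.length = n ∧ Ev (pos s l) := by
  rw [prob_eq_toReal_pathMass hA, ENNReal.ofReal_toReal
    (pathMass_ne_top hrow ((prefixFree_length_eq n).anti fun l h => h.1))]

lemma tsum_prob_eq (s : S N) (Ev : ℕ → (ℕ → S N) → Prop) :
    ∑' n, prob A s n (Ev n) = (pathMass A s fun l => Ev l.length (pos s l)).toReal := by
  rw [← tsum_pathMass_length_eq, ENNReal.tsum_toReal_eq fun n =>
    pathMass_ne_top hrow ((prefixFree_length_eq n).anti fun l h => h.1)]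
  refine tsum_congr fun n => ?_
  rw [prob_eq_toReal_pathMass hA]
  congr 1
  exact pathMass_congr fun l _ => by constructor <;> rintro ⟨rfl, h⟩ <;> exact ⟨rfl, h⟩

lemma pathMass_ne_top_of_summable {s : S N} {Ev : ℕ → (ℕ → S N) → Prop}
    (h : Summable fun n => prob A s n (Ev n)) :
    pathMass A s (fun l => Ev l.length (pos s l)) ≠ ∞ := by
  have hnonneg : ∀ n, 0 ≤ prob A s n (Ev n) := fun n => by
    rw [prob_eq_toReal_pathMass hA]
    exact ENNReal.toReal_nonneg
  rw [← tsum_pathMass_length_eq]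
  convert ENNReal.ofReal_ne_top (r := ∑' n, prob A s n (Ev n)) using 1
  rw [ENNReal.ofReal_tsum_of_nonneg hnonneg h]
  refine tsum_congr fun n => ?_
  rw [ofReal_prob hA hrow]
  exact pathMass_congr fun l _ => by constructor <;> rintro ⟨rfl, h⟩ <;> exact ⟨rfl, h⟩

end Bridge

def shiftState (c : ℤ) : S N ≃ S N := (Equiv.addRight c).prodCongr (Equiv.refl _)

@[simp] lemma shiftState_apply (c : ℤ) (s : S N) : shiftState c s = (s.1 + c, s.2) := rfl

lemma ewt_map_shiftState (c : ℤ) (s : S N) (l : List (S N)) :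
    ewt A (shiftState c s) (l.map (shiftState c)) = ewt A s l := by
  induction l generalizing s with
  | nil => rfl
  | cons t r ih =>
    rw [List.map_cons, ewt_cons, ewt_cons, ih]
    simp [estep]

lemma pathMass_shiftState (c : ℤ) (s : S N) (E : List (S N) → Prop) :
    pathMass A (shiftState c s) E = pathMass A s (fun l => E (l.map (shiftState c))) := by
  rw [pathMass, ← (Equiv.listEquivOfEquiv (shiftState c)).tsum_eq]
  exact tsum_congr fun l => by
    simp only [Equiv.listEquivOfEquiv, Equiv.coe_fn_mk, ewt_map_shiftState]

def FirstEntry (C : S N → Prop) (s u : S N) (l : List (S N)) : Prop :=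
  l ≠ [] ∧ (∀ k, 0 < k → k < l.length → ¬ C (pos s l k)) ∧ lastState s l = u ∧ C u

def SplitsAtFirstEntry (C : S N → Prop) (s : S N) (E : S N → List (S N) → Prop)
    (l : List (S N)) : Prop :=
  ∃ k, 0 < k ∧ k ≤ l.length ∧ (∀ m, 0 < m → m < k → ¬ C (pos s l m)) ∧ C (pos s l k) ∧
    E (pos s l k) (l.drop k)

lemma FirstEntry.length_le {C : S N → Prop} {s u u' : S N} {l₁ l₂ l₁' l₂' : List (S N)}
    (h : FirstEntry C s u l₁) (h' : FirstEntry C s u' l₁') (he : l₁ ++ l₂ = l₁' ++ l₂') :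
    l₁'.length ≤ l₁.length := by
  by_contra hlt
  push Not at hlt
  apply h'.2.1 l₁.length (List.length_pos_iff.2 h.1) hlt
  rw [← pos_append_left (l₂ := l₂') hlt.le, ← he, pos_append_left le_rfl, pos_length, h.2.2.1]
  exact h.2.2.2

lemma FirstEntry.append_inj {C : S N → Prop} {s u u' : S N} {l₁ l₂ l₁' l₂' : List (S N)}
    (h : FirstEntry C s u l₁) (h' : FirstEntry C s u' l₁') (he : l₁ ++ l₂ = l₁' ++ l₂') :
    l₁ = l₁' ∧ l₂ = l₂' :=
  List.append_inj he (le_antisymm (h'.length_le h he.symm) (h.length_le h' he))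

lemma firstEntry_take {C : S N → Prop} {s : S N} {l : List (S N)} {k : ℕ} (hk0 : 0 < k)
    (hk : k ≤ l.length) (hmin : ∀ m, 0 < m → m < k → ¬ C (pos s l m)) (hC : C (pos s l k)) :
    FirstEntry C s (pos s l k) (l.take k) := by
  refine ⟨?_, fun m hm0 hm => ?_, lastState_take hk, hC⟩
  · rw [ne_eq, List.take_eq_nil_iff]
    rintro (h | h)
    · omega
    · subst h
      simp at hk
      omega
  · rw [List.length_take_of_le hk] at hm
    rw [pos_take hm.le hk]
    exact hmin m hm0 hm

lemma splitsAtFirstEntry_append {C : S N → Prop} {s u : S N} {E : S N → List (S N) → Prop}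
    {l₁ l₂ : List (S N)} (h₁ : FirstEntry C s u l₁) (h₂ : E u l₂) :
    SplitsAtFirstEntry C s E (l₁ ++ l₂) := by
  have hu : pos s (l₁ ++ l₂) l₁.length = u := by
    rw [pos_append_left le_rfl, pos_length, h₁.2.2.1]
  refine ⟨l₁.length, List.length_pos_iff.2 h₁.1, by simp, fun m hm0 hm => ?_, hu ▸ h₁.2.2.2,
    by rwa [hu, List.drop_left]⟩
  rw [pos_append_left hm.le]
  exact h₁.2.1 m hm0 hm

lemma iff_splitsAtFirstEntry {C : S N → Prop} {s : S N} {P : Prop}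
    {E : S N → List (S N) → Prop} {l : List (S N)}
    (hvisit : P → ∃ k, 0 < k ∧ k ≤ l.length ∧ C (pos s l k))
    (hsuffix : ∀ k, 0 < k → k ≤ l.length → (∀ m, 0 < m → m < k → ¬ C (pos s l m)) →
      C (pos s l k) → (P ↔ E (pos s l k) (l.drop k))) :
    P ↔ SplitsAtFirstEntry C s E l := by
  constructor
  · intro hP
    obtain ⟨n, hn0, hn, hCn⟩ := hvisit hP
    obtain ⟨k, hkn, ⟨hk0, hCk⟩, hmin⟩ :=
      exists_first_le (P := fun m => 0 < m ∧ C (pos s l m)) ⟨hn0, hCn⟩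
    have hmin' : ∀ m, 0 < m → m < k → ¬ C (pos s l m) := fun m hm0 hm hC => hmin m hm ⟨hm0, hC⟩
    exact ⟨k, hk0, hkn.trans hn, hmin', hCk, (hsuffix k hk0 (hkn.trans hn) hmin' hCk).1 hP⟩
  · rintro ⟨k, hk0, hk, hmin, hCk, hE⟩
    exact (hsuffix k hk0 hk hmin hCk).2 hE

lemma prefixFree_firstEntry (C : S N → Prop) (s u : S N) : PrefixFree (FirstEntry C s u) := by
  intro l l' h₁ h₂
  by_contra hne
  apply h₂.2.1 l.length (List.length_pos_iff.2 h₁.1) (by simpa using List.length_pos_iff.2 hne)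
  rw [pos_append_left le_rfl, pos_length, h₁.2.2.1]
  exact h₁.2.2.2

/-- The strong Markov property at the first entrance into `C`. -/
lemma pathMass_splitsAtFirstEntry (C : S N → Prop) (s : S N) (E : S N → List (S N) → Prop) :
    pathMass A s (SplitsAtFirstEntry C s E)
      = ∑' u, pathMass A s (FirstEntry C s u) * pathMass A u (E u) := by
  have hprod : ∀ u, pathMass A s (FirstEntry C s u) * pathMass A u (E u)
      = ∑' p : List (S N) × List (S N), (if FirstEntry C s u p.1 then ewt A s p.1 else 0) *
          (if E u p.2 then ewt A u p.2 else 0) := fun u => by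
    rw [pathMass, pathMass, ← ENNReal.tsum_mul_right, ENNReal.tsum_prod']
    exact tsum_congr fun l₁ => ENNReal.tsum_mul_left.symm
  simp_rw [hprod]
  rw [← ENNReal.tsum_prod, pathMass]
  refine tsum_eq_tsum_of_ne_zero_bij (fun q => q.1.2.1 ++ q.1.2.2) ?_ ?_ ?_
  · rintro ⟨⟨u, l₁, l₂⟩, hq⟩ ⟨⟨u', l₁', l₂'⟩, hq'⟩ he
    simp only [Function.mem_support, ne_eq, mul_eq_zero, ite_eq_right_iff, not_or,
      not_forall] at hq hq' he
    obtain ⟨rfl, rfl⟩ := hq.1.1.append_inj hq'.1.1 he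
    have : u = u' := hq.1.1.2.2.1.symm.trans hq'.1.1.2.2.1
    subst this
    rfl
  · intro l hl
    simp only [Function.mem_support, ne_eq, ite_eq_right_iff, not_forall] at hl
    obtain ⟨⟨k, hk0, hk, hmin, hC, hE⟩, hw⟩ := hl
    refine ⟨⟨(pos s l k, l.take k, l.drop k), ?_⟩, List.take_append_drop k l⟩
    rw [ewt_eq_ewt_take_mul_ewt_drop hk] at hw
    simpa [firstEntry_take hk0 hk hmin hC, hE] using hw
  · rintro ⟨⟨u, l₁, l₂⟩, hq⟩
    simp only [Function.mem_support, ne_eq, mul_eq_zero, ite_eq_right_iff, not_or,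
      not_forall] at hq
    obtain ⟨⟨h₁, -⟩, h₂, -⟩ := hq
    simp only [splitsAtFirstEntry_append h₁ h₂, h₁, h₂, if_true, ewt_append, h₁.2.2.1]

lemma pathMass_splitsAtFirstEntry_of_level (C : S N → Prop) (i : Fin N)
    (E : S N → List (S N) → Prop) (y : ℤ) (hE : ∀ u l, E u l → u.1 = y) :
    pathMass A (0, i) (SplitsAtFirstEntry C (0, i) E)
      = ∑ j, pathMass A (0, i) (FirstEntry C (0, i) (y, j)) * pathMass A (y, j) (E (y, j)) := by
  rw [pathMass_splitsAtFirstEntry, ENNReal.tsum_prod', tsum_eq_single y fun y' hy' =>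
    ENNReal.tsum_eq_zero.2 fun j => by
      rw [pathMass_eq_zero fun l h => absurd (hE _ _ h) hy', mul_zero], tsum_fintype]

end PathMass

section Hitting

variable {A : ℤ → Matrix (Fin N) (Fin N) ℝ}

def HitsFirst (x : ℤ) (j : Fin N) (s : S N) (l : List (S N)) : Prop :=
  lastState s l = (x, j) ∧ ∀ k < l.length, (pos s l k).1 ≠ x

lemma hitsFirst_iff_splitsAtFirstEntry {C : S N → Prop} {x : ℤ} {j : Fin N} {s : S N}
    {l : List (S N)}
    (hC : ∀ k ≤ l.length, (pos s l k).1 = x → ∃ m, 0 < m ∧ m ≤ k ∧ C (pos s l m)) :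
    HitsFirst x j s l ↔ SplitsAtFirstEntry C s (HitsFirst x j) l := by
  refine iff_splitsAtFirstEntry (fun h => ?_) fun k hk0 hk hmin _ => ?_
  · obtain ⟨m, hm0, hm, hCm⟩ := hC l.length le_rfl (by rw [pos_length, h.1])
    exact ⟨m, hm0, hm, hCm⟩
  · rw [HitsFirst, HitsFirst, lastState_drop hk, List.length_drop]
    refine and_congr_right fun _ => ⟨fun h m hm => ?_, fun h m hm hx => ?_⟩
    · rw [pos_drop hk hm.le]
      exact h (k + m) (by omega)
    · by_cases hmk : k ≤ m
      · exact h (m - k) (by omega) (by rwa [pos_drop hk (by omega), Nat.add_sub_cancel' hmk])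
      · obtain ⟨m', hm'0, hm', hCm'⟩ := hC m hm.le hx
        exact hmin m' hm'0 (by omega) hCm'

lemma hitsFirst_cons {x : ℤ} {j : Fin N} {s t : S N} {r : List (S N)} (hs : s.1 ≠ x) :
    HitsFirst x j s (t :: r) ↔ HitsFirst x j t r := by
  refine and_congr Iff.rfl ⟨fun h k hk => ?_, fun h k hk => ?_⟩
  · rw [← pos_cons (s := s) hk.le]
    exact h (k + 1) (by simpa using hk)
  · cases k with
    | zero => exact hs
    | succ k =>
      rw [List.length_cons] at hk
      rw [pos_cons (by omega)]
      exact h k (by omega)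

lemma prefixFree_hitsFirst (x : ℤ) (j : Fin N) (s : S N) : PrefixFree (HitsFirst x j s) := by
  intro l l' h₁ h₂
  by_contra hne
  apply h₂.2 l.length (by simpa using List.length_pos_iff.2 hne)
  rw [pos_append_left le_rfl, pos_length, h₁.1]

variable (A) in
def eHit (x : ℤ) : Matrix (Fin N) (Fin N) ℝ≥0∞ :=
  Matrix.of fun i j => pathMass A (0, i) (HitsFirst x j (0, i))

lemma eHit_apply (x : ℤ) (i j : Fin N) :
    eHit A x i j = pathMass A (0, i) (HitsFirst x j (0, i)) := rfl

lemma eHit_ne_top (hrow : ∀ s : S N, ∑' t, estep A s t ≤ 1) (x : ℤ) (i j : Fin N) :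
    eHit A x i j ≠ ∞ :=
  pathMass_ne_top hrow (prefixFree_hitsFirst x j _)

lemma pathMass_hitsFirst (c x : ℤ) (i j : Fin N) :
    pathMass A (c, i) (HitsFirst x j (c, i)) = eHit A (x - c) i j := by
  have hs : ((c, i) : S N) = shiftState c (0, i) := by simp
  rw [hs, pathMass_shiftState, eHit_apply]
  refine pathMass_congr fun l _ => ?_
  simp only [HitsFirst, lastState_map, pos_map, List.length_map]
  simp only [shiftState_apply, Prod.ext_iff]
  constructor <;> rintro ⟨⟨h₁, h₂⟩, h₃⟩ <;> refine ⟨⟨by omega, h₂⟩, fun k hk => ?_⟩ <;>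
    have := h₃ k hk <;> omega

lemma pathMass_firstEntry_level {x : ℤ} (hx : x ≠ 0) (i j : Fin N) :
    pathMass A (0, i) (FirstEntry (fun u => u.1 = x) (0, i) (x, j)) = eHit A x i j := by
  refine pathMass_congr fun l _ => ⟨fun ⟨_, hmid, hend, _⟩ => ⟨hend, fun k hk => ?_⟩,
    fun ⟨hend, hbefore⟩ => ⟨?_, fun k _ hk => hbefore k hk, hend, rfl⟩⟩
  · rcases Nat.eq_zero_or_pos k with rfl | hk0
    · exact hx.symm
    · exact hmid k hk0 hk
  · rintro rfl
    exact hx (congrArg Prod.fst hend).symm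

lemma eHit_zero : eHit A 0 = 1 := by
  ext i j
  rw [eHit_apply, pathMass_eq_ite_add_ne_nil,
    pathMass_eq_zero fun l h => absurd rfl (h.1.2 0 (List.length_pos_iff.2 h.2)), add_zero]
  simp [HitsFirst, Matrix.one_apply]

lemma eHit_eq_tsum_estep {x : ℤ} (hx : x ≠ 0) (i j : Fin N) :
    eHit A x i j = ∑' t : S N, estep A (0, i) t * eHit A (x - t.1) t.2 j := by
  rw [eHit_apply, pathMass_eq_ite_add_tsum, if_neg fun h => hx (congrArg Prod.fst h.1).symm,
    zero_add]
  refine tsum_congr fun t => ?_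
  rw [← pathMass_hitsFirst]
  exact congrArg _ (pathMass_congr fun r _ => hitsFirst_cons hx.symm)

lemma eHit_succ (hskip : ∀ m : ℤ, 2 ≤ m → A m = 0) (n : ℕ) :
    eHit A (n + 1) = eHit A 1 * eHit A n := by
  ext i j
  have hsplit : ∀ l, ewt A (0, i) l ≠ 0 → (HitsFirst (n + 1) j (0, i) l ↔
      SplitsAtFirstEntry (fun u => u.1 = 1) (0, i)
        (fun u r => u.1 = 1 ∧ HitsFirst (n + 1) j u r) l) := fun l hw => by
    rw [hitsFirst_iff_splitsAtFirstEntry (C := fun u => u.1 = 1) fun k hk hx => ?_]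
    · exact ⟨fun ⟨k, hk0, hk, hmin, hC, h⟩ => ⟨k, hk0, hk, hmin, hC, hC, h⟩,
        fun ⟨k, hk0, hk, hmin, hC, _, h⟩ => ⟨k, hk0, hk, hmin, hC, h⟩⟩
    · obtain ⟨m, hm0, hm, hm1, -⟩ := exists_first_eq_of_succ_le
        (p := fun m => (pos (0, i) l m).1) (n := k) (c := 1)
        (fun m hm => level_pos_succ_le hskip hw m (by omega)) zero_lt_one
        (show (1 : ℤ) ≤ (pos (0, i) l k).1 by omega)
      exact ⟨m, hm0, hm, hm1⟩
  rw [Matrix.mul_apply, eHit_apply, pathMass_congr hsplit,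
    pathMass_splitsAtFirstEntry_of_level _ i _ 1 fun u l h => h.1]
  refine Finset.sum_congr rfl fun j' _ => ?_
  rw [pathMass_firstEntry_level one_ne_zero, ← add_sub_cancel_right (n : ℤ) 1,
    ← pathMass_hitsFirst, add_sub_cancel_right]
  exact congrArg _ (pathMass_congr fun l _ => and_iff_right rfl)

lemma eHit_natCast (hskip : ∀ m : ℤ, 2 ≤ m → A m = 0) (n : ℕ) : eHit A n = eHit A 1 ^ n := by
  induction n with
  | zero => rw [Nat.cast_zero, eHit_zero, pow_zero]
  | succ n ih => rw [Nat.cast_succ, eHit_succ hskip, ih, pow_succ']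

lemma eHit_add (hskip : ∀ m : ℤ, 2 ≤ m → A m = 0) {x y : ℤ} (hx : 0 ≤ x) (hy : 0 ≤ y) :
    eHit A (x + y) = eHit A x * eHit A y := by
  lift x to ℕ using hx
  lift y to ℕ using hy
  rw [← Nat.cast_add, eHit_natCast hskip, eHit_natCast hskip, eHit_natCast hskip, pow_add]

lemma tsum_eq_sum_level_add_tsum_ite {f : S N → ℝ≥0∞} (a : ℤ) {P : ℤ → Prop} [DecidablePred P]
    (hP : ¬ P a) (hf : ∀ u : S N, u.1 ≠ a → ¬ P u.1 → f u = 0) :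
    ∑' u, f u = ∑ j, f (a, j) + ∑' u, if P u.1 then f u else 0 := by
  have hsplit : ∀ u : S N, f u = (if u.1 = a then f u else 0) + (if P u.1 then f u else 0) :=
    fun u => by
      by_cases h₁ : u.1 = a
      · simp [h₁, hP]
      · by_cases h₂ : P u.1 <;> simp [h₁, h₂, hf u h₁]
  rw [tsum_congr hsplit, ENNReal.tsum_add, ENNReal.tsum_prod',
    tsum_eq_single a fun y hy => ENNReal.tsum_eq_zero.2 fun j => if_neg hy, tsum_fintype]
  simp

/-- Skip-freeness: a passage from a level `y ≤ d` up to `d + e` passes through `d`. -/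
lemma tsum_ite_mul_eHit_add (hskip : ∀ m : ℤ, 2 ≤ m → A m = 0) {P : ℤ → Prop} [DecidablePred P]
    {d e : ℤ} (hP : ∀ y, P y → y ≤ d) (he : 0 ≤ e) (g : S N → ℝ≥0∞) (j : Fin N) :
    ∑' u : S N, (if P u.1 then g u * eHit A (d + e - u.1) u.2 j else 0)
      = ∑ j', (∑' u : S N, if P u.1 then g u * eHit A (d - u.1) u.2 j' else 0) *
          eHit A e j' j := by
  have hpt : ∀ u : S N, (if P u.1 then g u * eHit A (d + e - u.1) u.2 j else 0)
      = ∑ j', (if P u.1 then g u * eHit A (d - u.1) u.2 j' else 0) * eHit A e j' j := fun u => by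
    by_cases h : P u.1
    · rw [show d + e - u.1 = d - u.1 + e by ring, eHit_add hskip (by linarith [hP _ h]) he,
        Matrix.mul_apply, Finset.mul_sum]
      simp only [h, if_true, mul_assoc]
    · simp [h]
  rw [tsum_congr hpt, Summable.tsum_finsetSum fun _ _ => ENNReal.summable]
  exact Finset.sum_congr rfl fun j' _ => ENNReal.tsum_mul_right

variable (A) in
def eDownStep : Matrix (Fin N) (Fin N) ℝ≥0∞ :=
  Matrix.of fun i j => ∑' u : S N, if u.1 ≤ 0 then estep A (0, i) u * eHit A (-u.1) u.2 j else 0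

lemma eHit_one_eq (hskip : ∀ m : ℤ, 2 ≤ m → A m = 0) :
    eHit A 1 = (A 1).map ENNReal.ofReal + eDownStep A * eHit A 1 := by
  ext i j
  have hdown := tsum_ite_mul_eHit_add hskip (P := (· ≤ 0)) (d := 0) (e := 1) (fun _ h => h)
    zero_le_one (estep A (0, i)) j
  rw [zero_add] at hdown
  rw [eHit_eq_tsum_estep one_ne_zero, tsum_eq_sum_level_add_tsum_ite 1 (P := (· ≤ 0))
      (by norm_num) fun u h₁ h₂ => by rw [estep, hskip _ (by simp at h₂; omega)]; simp, hdown]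
  simp [eHit_zero, Matrix.one_apply, estep, Matrix.mul_apply, eDownStep]

variable (A) in
def eStripExit (a b : ℤ) (i : Fin N) (u : S N) : ℝ≥0∞ :=
  pathMass A (0, i) (FirstEntry (fun u => a ≤ u.1 ∨ u.1 ≤ -b) (0, i) u)

variable (A) in
def eUpExit (a b : ℤ) : Matrix (Fin N) (Fin N) ℝ≥0∞ :=
  Matrix.of fun i j => eStripExit A a b i (a, j)

variable (A) in
def eDownReturn (a b : ℤ) : Matrix (Fin N) (Fin N) ℝ≥0∞ :=
  Matrix.of fun i j =>
    ∑' u : S N, if u.1 ≤ -b then eStripExit A a b i u * eHit A (-b - u.1) u.2 j else 0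

lemma eHit_eq_tsum_eStripExit {a b z : ℤ} (ha : 1 ≤ a) (hb : 1 ≤ b) (hz : a ≤ z ∨ z ≤ -b)
    (i j : Fin N) :
    eHit A z i j = ∑' u : S N, eStripExit A a b i u * eHit A (z - u.1) u.2 j := by
  rw [eHit_apply, pathMass_congr fun l _ =>
    hitsFirst_iff_splitsAtFirstEntry (C := fun u => a ≤ u.1 ∨ u.1 ≤ -b) fun k _ hk => ?_,
    pathMass_splitsAtFirstEntry]
  · exact tsum_congr fun u => by rw [← pathMass_hitsFirst]; rfl
  · rcases Nat.eq_zero_or_pos k with rfl | hk0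
    · rw [pos_zero] at hk
      rcases hz with hz | hz <;> linarith [hk, hb]
    · exact ⟨k, hk0, le_rfl, by rw [hk]; exact hz⟩

lemma eStripExit_eq_zero (hskip : ∀ m : ℤ, 2 ≤ m → A m = 0) {a b : ℤ} (ha : 1 ≤ a) (i : Fin N)
    {u : S N} (hua : u.1 ≠ a) (hub : ¬ u.1 ≤ -b) :
    eStripExit A a b i u = 0 := by
  refine pathMass_eq_zero fun l ⟨hne, hmid, hend, hCu⟩ => ?_
  by_contra hw
  have hlen : 0 < l.length := List.length_pos_iff.2 hne
  have hstep := level_pos_succ_le hskip hw (l.length - 1) (by omega)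
  rw [Nat.sub_add_cancel hlen, pos_length, hend] at hstep
  rcases Nat.eq_zero_or_pos (l.length - 1) with h0 | h0
  · rw [h0] at hstep
    simp at hstep
    omega
  · have := hmid (l.length - 1) h0 (by omega)
    omega

/-- Upward exits from the strip `(-b, a)` land exactly on level `a`, since the chain is upward
skip-free. -/
lemma eHit_eq_sum_eUpExit_add (hskip : ∀ m : ℤ, 2 ≤ m → A m = 0) {a b z : ℤ} (ha : 1 ≤ a)
    (hb : 1 ≤ b) (hz : a ≤ z ∨ z ≤ -b) (i j : Fin N) :
    eHit A z i j = ∑ j', eUpExit A a b i j' * eHit A (z - a) j' j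
      + ∑' u : S N, if u.1 ≤ -b then eStripExit A a b i u * eHit A (z - u.1) u.2 j else 0 := by
  rw [eHit_eq_tsum_eStripExit ha hb hz, tsum_eq_sum_level_add_tsum_ite a (P := (· ≤ -b))
    (show ¬ a ≤ -b by omega) fun u h₁ h₂ => by rw [eStripExit_eq_zero hskip ha i h₁ h₂, zero_mul]]
  rfl

lemma eHit_eq_eUpExit_add_eDownReturn_mul (hskip : ∀ m : ℤ, 2 ≤ m → A m = 0) {a b : ℤ} (ha : 1 ≤ a)
    (hb : 1 ≤ b) : eHit A a = eUpExit A a b + eDownReturn A a b * eHit A (a + b) := by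
  ext i j
  have hdown := tsum_ite_mul_eHit_add hskip (P := (· ≤ -b)) (d := -b) (e := a + b)
    (fun _ h => h) (by omega) (eStripExit A a b i) j
  rw [show -b + (a + b) = a by ring] at hdown
  rw [eHit_eq_sum_eUpExit_add hskip ha hb (Or.inl le_rfl), sub_self, eHit_zero, hdown]
  simp [Matrix.one_apply, Matrix.mul_apply, eDownReturn]

lemma eHit_neg_eq_eUpExit_mul_add (hskip : ∀ m : ℤ, 2 ≤ m → A m = 0) {a b : ℤ} (ha : 1 ≤ a)
    (hb : 1 ≤ b) : eHit A (-b) = eUpExit A a b * eHit A (-(a + b)) + eDownReturn A a b := by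
  ext i j
  rw [eHit_eq_sum_eUpExit_add hskip ha hb (Or.inr le_rfl), show -b - a = -(a + b) by ring]
  rfl

end Hitting

section Occupation

variable {A : ℤ → Matrix (Fin N) (Fin N) ℝ}

variable (A) in
def eOcc (x : ℤ) : Matrix (Fin N) (Fin N) ℝ≥0∞ :=
  Matrix.of fun i j => pathMass A (0, i) fun l => lastState (0, i) l = (x, j)

variable (A) in
def eTabooOcc (V : ℤ → Prop) : Matrix (Fin N) (Fin N) ℝ≥0∞ :=
  Matrix.of fun i j => pathMass A (0, i) fun l =>
    lastState (0, i) l = (0, j) ∧ ∀ k ≤ l.length, ¬ V (pos (0, i) l k).1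

variable (A) in
def eTabooReturn (V : ℤ → Prop) : Matrix (Fin N) (Fin N) ℝ≥0∞ :=
  Matrix.of fun i j => pathMass A (0, i) (FirstEntry (fun u => u.1 = 0 ∨ V u.1) (0, i) (0, j))

lemma pathMass_lastState (c x : ℤ) (i j : Fin N) :
    pathMass A (c, i) (fun l => lastState (c, i) l = (x, j)) = eOcc A (x - c) i j := by
  have hs : ((c, i) : S N) = shiftState c (0, i) := by simp
  rw [hs, pathMass_shiftState]
  refine pathMass_congr fun l _ => ?_
  simp only [lastState_map]
  simp only [shiftState_apply, Prod.ext_iff]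
  constructor <;> rintro ⟨h₁, h₂⟩ <;> exact ⟨by omega, h₂⟩

/-- First-return decomposition. -/
lemma eTabooOcc_eq {V : ℤ → Prop} (hV : ¬ V 0) :
    eTabooOcc A V = 1 + eTabooReturn A V * eTabooOcc A V := by
  ext i j
  have hsplit : ∀ l, ewt A (0, i) l ≠ 0 →
      ((lastState (0, i) l = (0, j) ∧ ∀ k ≤ l.length, ¬ V (pos (0, i) l k).1) ∧ l ≠ [] ↔
        SplitsAtFirstEntry (fun u => u.1 = 0 ∨ V u.1) (0, i)
          (fun u r => u.1 = 0 ∧ lastState u r = (0, j) ∧ ∀ k ≤ r.length, ¬ V (pos u r k).1) l) :=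
    fun l _ => by
      apply iff_splitsAtFirstEntry
      · intro h
        exact ⟨l.length, List.length_pos_iff.2 h.2, le_rfl, Or.inl (by rw [pos_length, h.1.1])⟩
      · intro k hk0 hk hmin hC
        rw [lastState_drop hk, List.length_drop]
        constructor
        · rintro ⟨⟨hend, htaboo⟩, -⟩
          refine ⟨hC.resolve_right (htaboo k hk), hend, fun m hm => ?_⟩
          rw [pos_drop hk hm]
          exact htaboo _ (by omega)
        · rintro ⟨-, hend, htaboo⟩
          refine ⟨⟨hend, fun m hm => ?_⟩, List.ne_nil_of_length_pos (by omega)⟩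
          rcases lt_or_ge m k with hmk | hmk
          · rcases Nat.eq_zero_or_pos m with rfl | hm0
            · exact hV
            · exact fun h => hmin m hm0 hmk (Or.inr h)
          · have := htaboo (m - k) (by omega)
            rwa [pos_drop hk (by omega), Nat.add_sub_cancel' hmk] at this
  rw [Matrix.add_apply, Matrix.mul_apply, eTabooOcc, Matrix.of_apply, pathMass_eq_ite_add_ne_nil,
    pathMass_congr hsplit, pathMass_splitsAtFirstEntry_of_level _ i _ 0 fun u l h => h.1]
  congr 1
  · simp [Matrix.one_apply, hV]
  · exact Finset.sum_congr rfl fun j' _ =>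
      congrArg _ (pathMass_congr fun l _ => and_iff_right rfl)

lemma eOcc_eq_eHit_mul {x : ℤ} (hx : x ≠ 0) : eOcc A x = eHit A x * eOcc A 0 := by
  ext i j
  have hsplit : ∀ l, ewt A (0, i) l ≠ 0 → (lastState (0, i) l = (x, j) ↔
      SplitsAtFirstEntry (fun u => u.1 = x) (0, i) (fun u r => u.1 = x ∧ lastState u r = (x, j))
        l) :=
    fun l _ => by
      apply iff_splitsAtFirstEntry
      · intro h
        refine ⟨l.length, List.length_pos_iff.2 fun hl => ?_, le_rfl, by rw [pos_length, h]⟩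
        subst hl
        exact hx (congrArg Prod.fst h).symm
      · intro k _ hk _ hC
        rw [lastState_drop hk]
        exact (and_iff_right hC).symm
  have hocc := pathMass_lastState (A := A) x x
  simp only [sub_self] at hocc
  rw [Matrix.mul_apply, eOcc, Matrix.of_apply, pathMass_congr hsplit,
    pathMass_splitsAtFirstEntry_of_level _ i _ x fun u l h => h.1]
  refine Finset.sum_congr rfl fun j' _ => ?_
  rw [pathMass_firstEntry_level hx, ← hocc]
  exact congrArg _ (pathMass_congr fun l _ => and_iff_right rfl)

/-- Splitting the occupation of level `0` according to whether level `x` has been visited. -/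
lemma eOcc_zero_eq {x : ℤ} (hx : x ≠ 0) :
    eOcc A 0 = eTabooOcc A (· = x) + eHit A x * eOcc A (-x) := by
  ext i j
  have hsplit : ∀ l, ewt A (0, i) l ≠ 0 →
      ((lastState (0, i) l = (0, j) ∧ ¬ ∀ k ≤ l.length, (pos (0, i) l k).1 ≠ x) ↔
        SplitsAtFirstEntry (fun u => u.1 = x) (0, i)
          (fun u r => u.1 = x ∧ lastState u r = (0, j)) l) :=
    fun l _ => by
      apply iff_splitsAtFirstEntry
      · rintro ⟨-, h⟩
        push Not at h
        obtain ⟨k, hk, hkx⟩ := h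
        refine ⟨k, Nat.pos_of_ne_zero ?_, hk, hkx⟩
        rintro rfl
        exact hx hkx.symm
      · intro k _ hk _ hC
        rw [lastState_drop hk]
        exact ⟨fun h => ⟨hC, h.1⟩, fun h => ⟨h.2, fun hall => hall k hk hC⟩⟩
  have hocc := pathMass_lastState (A := A) x 0
  simp only [zero_sub] at hocc
  rw [Matrix.add_apply, Matrix.mul_apply, eOcc, Matrix.of_apply,
    pathMass_eq_add_not _ _ fun l => ∀ k ≤ l.length, (pos (0, i) l k).1 ≠ x,
    pathMass_congr hsplit, pathMass_splitsAtFirstEntry_of_level _ i _ x fun u l h => h.1]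
  congr 1
  refine Finset.sum_congr rfl fun j' _ => ?_
  rw [pathMass_firstEntry_level hx, ← hocc]
  exact congrArg _ (pathMass_congr fun l _ => and_iff_right rfl)

end Occupation

section Finiteness

variable {A : ℤ → Matrix (Fin N) (Fin N) ℝ} (hrow : ∀ s : S N, ∑' t, estep A s t ≤ 1)
include hrow

lemma eTabooReturn_ne_top (V : ℤ → Prop) (i j : Fin N) : eTabooReturn A V i j ≠ ∞ :=
  pathMass_ne_top hrow (prefixFree_firstEntry _ _ _)

lemma eUpExit_ne_top (a b : ℤ) (i j : Fin N) : eUpExit A a b i j ≠ ∞ :=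
  pathMass_ne_top hrow (prefixFree_firstEntry _ _ _)

lemma eDownReturn_ne_top (hskip : ∀ m : ℤ, 2 ≤ m → A m = 0) {a b : ℤ} (ha : 1 ≤ a) (hb : 1 ≤ b)
    (i j : Fin N) : eDownReturn A a b i j ≠ ∞ := by
  refine ne_top_of_le_ne_top (eHit_ne_top hrow (-b) i j) ?_
  rw [eHit_neg_eq_eUpExit_mul_add hskip ha hb]
  exact le_add_self

lemma eDownStep_ne_top (i j : Fin N) : eDownStep A i j ≠ ∞ := by
  refine ne_top_of_le_ne_top ENNReal.one_ne_top
    ((ENNReal.tsum_le_tsum (g := estep A (0, i)) fun u => ?_).trans (hrow (0, i)))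
  split_ifs
  · exact mul_le_of_le_one_right' (pathMass_le_one hrow (prefixFree_hitsFirst _ _ _))
  · exact zero_le

lemma eOcc_zero_ne_top (hA : ∀ m i j, 0 ≤ A m i j)
    (hL : ∀ i j : Fin N,
      Summable fun k : ℕ => prob A ((0 : ℤ), i) k fun p => p k = ((0 : ℤ), j))
    (i j : Fin N) : eOcc A 0 i j ≠ ∞ := by
  have h := pathMass_ne_top_of_summable hA hrow (hL i j)
  rwa [pathMass_congr fun l _ => by rw [pos_length]] at h

lemma eTabooOcc_ne_top (hA : ∀ m i j, 0 ≤ A m i j)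
    (hL : ∀ i j : Fin N,
      Summable fun k : ℕ => prob A ((0 : ℤ), i) k fun p => p k = ((0 : ℤ), j))
    (V : ℤ → Prop) (i j : Fin N) : eTabooOcc A V i j ≠ ∞ :=
  ne_top_of_le_ne_top (eOcc_zero_ne_top hrow hA hL i j) (pathMass_mono fun _ h => h.1)

end Finiteness

section MatrixAlgebra

lemma isUnit_of_eq_add_mul {R : Type*} [Ring R] [IsDedekindFiniteMonoid R] {g a b : R}
    (ha : IsUnit a) (h : g = a + b * g) : IsUnit g :=
  isUnit_of_mul_isUnit_right (x := 1 - b) (by rwa [sub_mul, one_mul, sub_eq_of_eq_add h])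

variable {n α : Type*} [Fintype n] [DecidableEq n] [CommRing α] {G : Matrix n n α}

lemma Matrix.inv_pow_mul_pow (hG : IsUnit G) (k : ℕ) : G⁻¹ ^ k * G ^ k = 1 := by
  rw [Matrix.inv_pow', Matrix.nonsing_inv_mul _ ((Matrix.isUnit_iff_isUnit_det _).1 (hG.pow k))]

lemma Matrix.pow_mul_inv_pow (hG : IsUnit G) (k : ℕ) : G ^ k * G⁻¹ ^ k = 1 := by
  rw [Matrix.inv_pow', Matrix.mul_nonsing_inv _ ((Matrix.isUnit_iff_isUnit_det _).1 (hG.pow k))]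

lemma Matrix.inv_pow_sub_mul_eq {H L M : Matrix n n α} (hG : IsUnit G) (k : ℕ)
    (h : L = M + G ^ k * H * L) : (G⁻¹ ^ k - H) * L = G⁻¹ ^ k * M := by
  rw [eq_sub_of_add_eq h.symm, mul_sub, ← mul_assoc, ← mul_assoc, Matrix.inv_pow_mul_pow hG,
    one_mul, sub_mul]

lemma Matrix.mul_inv_pow_sub_eq {U D Hb Hab : Matrix n n α} (hG : IsUnit G) (a b : ℕ)
    (h₁ : G ^ a = U + D * G ^ (a + b)) (h₂ : Hb = U * Hab + D) :
    U * (G⁻¹ ^ (a + b) - Hab) = G⁻¹ ^ b - Hb := by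
  have hb : G⁻¹ ^ b = U * G⁻¹ ^ (a + b) + D :=
    calc G⁻¹ ^ b = G ^ a * G⁻¹ ^ (a + b) := by
          rw [pow_add, ← mul_assoc, Matrix.pow_mul_inv_pow hG, one_mul]
      _ = U * G⁻¹ ^ (a + b) + D := by
          rw [h₁, add_mul, mul_assoc, Matrix.pow_mul_inv_pow hG, mul_one]
  rw [hb, h₂, mul_sub]
  abel

end MatrixAlgebra

section ToReal

variable {l m n : Type*}

lemma map_toReal_add {X Y : Matrix m n ℝ≥0∞} (hX : ∀ i j, X i j ≠ ∞) (hY : ∀ i j, Y i j ≠ ∞) :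
    (X + Y).map ENNReal.toReal = X.map ENNReal.toReal + Y.map ENNReal.toReal := by
  ext i j
  exact ENNReal.toReal_add (hX i j) (hY i j)

lemma mul_apply_ne_top [Fintype m] {X : Matrix l m ℝ≥0∞} {Y : Matrix m n ℝ≥0∞}
    (hX : ∀ i j, X i j ≠ ∞) (hY : ∀ i j, Y i j ≠ ∞) (i : l) (j : n) : (X * Y) i j ≠ ∞ :=
  ENNReal.sum_ne_top.2 fun k _ => ENNReal.mul_ne_top (hX i k) (hY k j)

lemma map_toReal_mul [Fintype m] {X : Matrix l m ℝ≥0∞} {Y : Matrix m n ℝ≥0∞}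
    (hX : ∀ i j, X i j ≠ ∞) (hY : ∀ i j, Y i j ≠ ∞) :
    (X * Y).map ENNReal.toReal = X.map ENNReal.toReal * Y.map ENNReal.toReal := by
  ext i j
  simp only [Matrix.map_apply, Matrix.mul_apply,
    ENNReal.toReal_sum fun k _ => ENNReal.mul_ne_top (hX i k) (hY k j), ENNReal.toReal_mul]

end ToReal

section RealIdentities

variable {A : ℤ → Matrix (Fin N) (Fin N) ℝ} (hA : ∀ m i j, 0 ≤ A m i j)
  (hrow : ∀ s : S N, ∑' t, estep A s t ≤ 1)
include hA hrow

lemma hitMat_eq_map (x : ℤ) : hitMat A 1 x = (eHit A x).map ENNReal.toReal := by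
  ext i j
  simp only [hitMat, Matrix.of_apply, one_pow, one_mul, Matrix.map_apply]
  rw [tsum_prob_eq hA hrow]
  refine congrArg _ (pathMass_congr fun l _ => ?_)
  simp only [hitsAt, HitsFirst, pos_length, Prod.ext_iff]
  tauto

lemma Ltilde_eq_map : Ltilde A = (eOcc A 0).map ENNReal.toReal := by
  ext i j
  simp only [Ltilde, occMat, Matrix.of_apply, one_pow, one_mul, Matrix.map_apply]
  rw [tsum_prob_eq hA hrow]
  exact congrArg _ (pathMass_congr fun l _ => by rw [pos_length])

lemma eTabooOcc_map_isUnit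
    (hL : ∀ i j : Fin N,
      Summable fun k : ℕ => prob A ((0 : ℤ), i) k fun p => p k = ((0 : ℤ), j))
    (V : ℤ → Prop) (hV : ¬ V 0) :
    IsUnit ((eTabooOcc A V).map ENNReal.toReal) := by
  refine isUnit_of_eq_add_mul isUnit_one (b := (eTabooReturn A V).map ENNReal.toReal) ?_
  rw [← map_toReal_mul (eTabooReturn_ne_top hrow V) (eTabooOcc_ne_top hrow hA hL V),
    ← Matrix.map_one ENNReal.toReal ENNReal.toReal_zero ENNReal.toReal_one,
    ← map_toReal_add (fun i j => by by_cases h : i = j <;> simp [Matrix.one_apply, h])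
      (mul_apply_ne_top (eTabooReturn_ne_top hrow V) (eTabooOcc_ne_top hrow hA hL V)),
    ← eTabooOcc_eq hV]

variable (hskip : ∀ m : ℤ, 2 ≤ m → A m = 0)
include hskip

lemma upExitMat_eq_map {a b : ℤ} (ha : 1 ≤ a) (hb : 1 ≤ b) :
    upExitMat A 1 a b = (eUpExit A a b).map ENNReal.toReal := by
  ext i j
  simp only [upExitMat, Matrix.of_apply, one_pow, one_mul, Matrix.map_apply]
  rw [tsum_prob_eq hA hrow]
  refine congrArg _ (pathMass_congr fun l hw => ?_)
  rw [pos_length]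
  constructor
  · rintro ⟨hup, hin, hj⟩
    have hne : l ≠ [] := by
      rintro rfl
      simp at hup
      omega
    have hlen := List.length_pos_iff.2 hne
    have hstep := level_pos_succ_le hskip hw (l.length - 1) (by omega)
    rw [Nat.sub_add_cancel hlen, pos_length] at hstep
    have hlast := (hin (l.length - 1) (by omega)).2
    refine ⟨hne, fun k _ hk hC => ?_, Prod.ext (by omega) hj, Or.inl le_rfl⟩
    have := hin k hk
    omega
  · rintro ⟨-, hmid, hend, -⟩
    refine ⟨by rw [hend], fun k hk => ?_, by rw [hend]⟩
    rcases Nat.eq_zero_or_pos k with rfl | hk0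
    · simp only [pos_zero]
      omega
    · have := hmid k hk0 hk
      omega

lemma hitMat_natCast (n : ℕ) : hitMat A 1 n = Gmat A ^ n := by
  induction n with
  | zero => rw [Nat.cast_zero, hitMat_eq_map hA hrow, eHit_zero, pow_zero, Matrix.map_one] <;> simp
  | succ n ih =>
    rw [Nat.cast_succ, hitMat_eq_map hA hrow, eHit_succ hskip,
      map_toReal_mul (eHit_ne_top hrow 1) (eHit_ne_top hrow n), ← hitMat_eq_map hA hrow,
      ← hitMat_eq_map hA hrow, ih, pow_succ']
    rfl

lemma Gmat_eq_add_mul :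
    Gmat A = A 1 + (eDownStep A).map ENNReal.toReal * Gmat A := by
  have hA1 : ((A 1).map ENNReal.ofReal).map ENNReal.toReal = A 1 := by
    ext i j
    exact ENNReal.toReal_ofReal (hA 1 i j)
  have h := congrArg (Matrix.map · ENNReal.toReal) (eHit_one_eq (A := A) hskip)
  rw [map_toReal_add (X := (A 1).map ENNReal.ofReal) (fun _ _ => ENNReal.ofReal_ne_top)
      (mul_apply_ne_top (eDownStep_ne_top hrow) (eHit_ne_top hrow 1)),
    map_toReal_mul (eDownStep_ne_top hrow) (eHit_ne_top hrow 1), hA1,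
    ← hitMat_eq_map hA hrow] at h
  exact h

lemma Gmat_isUnit (hA1 : IsUnit (A 1)) : IsUnit (Gmat A) :=
  isUnit_of_eq_add_mul hA1 (Gmat_eq_add_mul hA hrow hskip)

lemma Gmat_pow_eq_upExitMat_add {a b : ℕ} (ha : 1 ≤ a) (hb : 1 ≤ b) :
    Gmat A ^ a = upExitMat A 1 a b + (eDownReturn A a b).map ENNReal.toReal * Gmat A ^ (a + b) := by
  have ha' : (1 : ℤ) ≤ a := by exact_mod_cast ha
  have hb' : (1 : ℤ) ≤ b := by exact_mod_cast hb
  rw [← hitMat_natCast hA hrow hskip, ← hitMat_natCast hA hrow hskip, hitMat_eq_map hA hrow,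
    hitMat_eq_map hA hrow, Nat.cast_add, eHit_eq_eUpExit_add_eDownReturn_mul hskip ha' hb',
    map_toReal_add (eUpExit_ne_top hrow a b)
      (mul_apply_ne_top (eDownReturn_ne_top hrow hskip ha' hb') (eHit_ne_top hrow _)),
    map_toReal_mul (eDownReturn_ne_top hrow hskip ha' hb') (eHit_ne_top hrow _),
    upExitMat_eq_map hA hrow hskip ha' hb']

lemma hitMat_neg_eq_upExitMat_mul_add {a b : ℕ} (ha : 1 ≤ a) (hb : 1 ≤ b) :
    hitMat A 1 (-b) = upExitMat A 1 a b * hitMat A 1 (-(a + b))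
      + (eDownReturn A a b).map ENNReal.toReal := by
  have ha' : (1 : ℤ) ≤ a := by exact_mod_cast ha
  have hb' : (1 : ℤ) ≤ b := by exact_mod_cast hb
  rw [hitMat_eq_map hA hrow, hitMat_eq_map hA hrow, eHit_neg_eq_eUpExit_mul_add hskip ha' hb',
    map_toReal_add (mul_apply_ne_top (eUpExit_ne_top hrow a b) (eHit_ne_top hrow _))
      (eDownReturn_ne_top hrow hskip ha' hb'),
    map_toReal_mul (eUpExit_ne_top hrow a b) (eHit_ne_top hrow _),
    upExitMat_eq_map hA hrow hskip ha' hb']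

variable (hL : ∀ i j : Fin N,
  Summable fun k : ℕ => prob A ((0 : ℤ), i) k fun p => p k = ((0 : ℤ), j))
include hL

lemma Ltilde_eq_add {n : ℕ} (hn : 1 ≤ n) :
    Ltilde A = (eTabooOcc A (· = (n : ℤ))).map ENNReal.toReal
      + Gmat A ^ n * hitMat A 1 (-n) * Ltilde A := by
  have hn' : (n : ℤ) ≠ 0 := by omega
  have hL0 := eOcc_zero_ne_top hrow hA hL
  rw [Ltilde_eq_map hA hrow, ← hitMat_natCast hA hrow hskip, hitMat_eq_map hA hrow,
    hitMat_eq_map hA hrow, mul_assoc, ← map_toReal_mul (eHit_ne_top hrow _) hL0,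
    ← map_toReal_mul (eHit_ne_top hrow _) (mul_apply_ne_top (eHit_ne_top hrow _) hL0),
    ← map_toReal_add (eTabooOcc_ne_top hrow hA hL _)
      (mul_apply_ne_top (eHit_ne_top hrow _) (mul_apply_ne_top (eHit_ne_top hrow _) hL0)),
    ← eOcc_eq_eHit_mul (neg_ne_zero.2 hn'), ← eOcc_zero_eq hn']

lemma Wmat_eq_inv_pow_mul {n : ℕ} (hn : 1 ≤ n) (hA1 : IsUnit (A 1)) :
    Wmat A n = (Gmat A)⁻¹ ^ n * (eTabooOcc A (· = (n : ℤ))).map ENNReal.toReal :=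
  Matrix.inv_pow_sub_mul_eq (Gmat_isUnit hA hrow hskip hA1) n
    (Ltilde_eq_add hA hrow hskip hL hn)

lemma Wmat_isUnit {n : ℕ} (hn : 1 ≤ n) (hA1 : IsUnit (A 1)) : IsUnit (Wmat A n) := by
  rw [Wmat_eq_inv_pow_mul hA hrow hskip hL hn hA1]
  exact ((Matrix.isUnit_nonsing_inv_iff.2 (Gmat_isUnit hA hrow hskip hA1)).pow n).mul
    (eTabooOcc_map_isUnit hA hrow hL _ (by omega))

end RealIdentities

lemma upExitMat_mul_Wmat {A : ℤ → Matrix (Fin N) (Fin N) ℝ} (hA : ∀ m i j, 0 ≤ A m i j)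
    (hrow : ∀ s : S N, ∑' t, estep A s t ≤ 1) (hskip : ∀ m : ℤ, 2 ≤ m → A m = 0)
    (hA1 : IsUnit (A 1)) {a b : ℕ} (ha : 1 ≤ a) (hb : 1 ≤ b) :
    upExitMat A 1 a b * Wmat A (a + b) = Wmat A b := by
  rw [Wmat, Wmat, ← mul_assoc, Nat.cast_add,
    Matrix.mul_inv_pow_sub_eq (Gmat_isUnit hA hrow hskip hA1) a b
      (Gmat_pow_eq_upExitMat_add hA hrow hskip ha hb)
      (hitMat_neg_eq_upExitMat_mul_add hA hrow hskip ha hb)]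

theorem statement9_general {N : ℕ} (A : ℤ → Matrix (Fin N) (Fin N) ℝ)
    (hA : ∀ m i j, 0 ≤ A m i j)
    (hskip : ∀ m : ℤ, 2 ≤ m → A m = 0)
    (hsum : ∀ i, Summable fun q : ℤ × Fin N => A q.1 i q.2)
    (hsub : ∀ i, ∑' q : ℤ × Fin N, A q.1 i q.2 ≤ 1)
    (hA1 : IsUnit (A 1))
    (hL : ∀ i j : Fin N,
      Summable fun k : ℕ => prob A ((0 : ℤ), i) k fun p => p k = ((0 : ℤ), j)) :
    (∀ n : ℕ, 1 ≤ n → IsUnit (Wmat A n)) ∧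
    ∀ a b : ℕ, 1 ≤ a → 1 ≤ b →
      upExitMat A 1 (a : ℤ) (b : ℤ) = Wmat A b * (Wmat A (a + b))⁻¹ := by
  have hrow := estep_tsum_le_one hA hsum hsub
  have hW : ∀ n : ℕ, 1 ≤ n → IsUnit (Wmat A n) := fun n hn =>
    Wmat_isUnit hA hrow hskip hL hn hA1
  refine ⟨hW, fun a b ha hb => ?_⟩
  rw [← upExitMat_mul_Wmat hA hrow hskip hA1 ha hb, Matrix.mul_nonsing_inv_cancel_right _ _
    ((Matrix.isUnit_iff_isUnit_det _).1 (hW (a + b) (by omega)))]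

/-- Two-sided upward exit: W(n) is invertible for n ≥ 1 and
ℙ(τ_a^+ < τ_{-b}^-, J_{τ_a^+}) = W(b) W(a+b)⁻¹ for all a, b ≥ 1. -/
theorem statement9 {N : ℕ} (hN : 0 < N) (A : ℤ → Matrix (Fin N) (Fin N) ℝ)
    (hA : ∀ m i j, 0 ≤ A m i j)
    (hskip : ∀ m : ℤ, 2 ≤ m → A m = 0)
    (hsum : ∀ i, Summable fun q : ℤ × Fin N => A q.1 i q.2)
    (hsub : ∀ i, ∑' q : ℤ × Fin N, A q.1 i q.2 ≤ 1)
    (hA1 : IsUnit (A 1))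
    (hL : ∀ i j : Fin N,
      Summable fun k : ℕ => prob A ((0 : ℤ), i) k fun p => p k = ((0 : ℤ), j)) :
    (∀ n : ℕ, 1 ≤ n → IsUnit (Wmat A n)) ∧
    ∀ a b : ℕ, 1 ≤ a → 1 ≤ b →
      upExitMat A 1 (a : ℤ) (b : ℤ) = Wmat A b * (Wmat A (a + b))⁻¹ :=
  statement9_general A hA hskip hsum hsub hA1 hL

end MACPaper

end
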